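/- Let n ≥ 2. There is no state h on the Brown algebra U_n^nc such that φ ⋆_AM h = h for every tracial state φ on U_n^nc. In particular, there exists neither an anti-monotone Haar state (a state h with φ ⋆_AM h = h = h ⋆_AM φ for all states φ) nor an anti-monotone Haar trace (a tracial state h with φ ⋆_AM h = h = h ⋆_AM φ for all tracial states φ) on U⟨n⟩. -/

import Mathlib

noncomputable section

/-- A state on a unital `⋆`-algebra over `ℂ`. -/
def IsState {A : Type} [Ring A] [Algebra ℂ A] [StarRing A]
    (φ : A →ₗ[ℂ] ℂ) : Prop :=
  φ 1 = 1 ∧ ∀ a : A, 0 ≤ (φ (star a * a)).re ∧ (φ (star a * a)).im = 0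

/-- A tracial state. -/
def IsTracialState {A : Type} [Ring A] [Algebra ℂ A] [StarRing A]
    (φ : A →ₗ[ℂ] ℂ) : Prop :=
  IsState φ ∧ ∀ a b : A, φ (a * b) = φ (b * a)

/-- The Brown algebra `U_n^nc`: a unital `⋆`-algebra generated by `n²` elements
`u i j` subject to the unitarity relations, together with its universal property. -/
structure BrownAlg (n : ℕ) where
  carrier : Type
  [ring : Ring carrier]
  [algebra : Algebra ℂ carrier]
  [starRing : StarRing carrier]
  [starModule : StarModule ℂ carrier]
  u : Fin n → Fin n → carrier
  rel_left : ∀ i j, (∑ k, star (u k i) * u k j) = if i = j then 1 else 0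
  rel_right : ∀ i j, (∑ k, u i k * star (u j k)) = if i = j then 1 else 0
  universal : ∀ (C : Type) [Ring C] [Algebra ℂ C] [StarRing C] [StarModule ℂ C]
      (v : Fin n → Fin n → C),
      (∀ i j, (∑ k, star (v k i) * v k j) = if i = j then 1 else 0) →
      (∀ i j, (∑ k, v i k * star (v j k)) = if i = j then 1 else 0) →
      ∃! f : carrier →⋆ₐ[ℂ] C, ∀ i j, f (u i j) = v i j

attribute [instance] BrownAlg.ring BrownAlg.algebra BrownAlg.starRing BrownAlg.starModule

/-- The free product (coproduct) of two unital `⋆`-algebras over `ℂ`,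
presented through its universal property. -/
structure FreeProd (A B : Type) [Ring A] [Algebra ℂ A] [StarRing A]
    [Ring B] [Algebra ℂ B] [StarRing B] where
  carrier : Type
  [ring : Ring carrier]
  [algebra : Algebra ℂ carrier]
  [starRing : StarRing carrier]
  [starModule : StarModule ℂ carrier]
  inl : A →⋆ₐ[ℂ] carrier
  inr : B →⋆ₐ[ℂ] carrier
  universal : ∀ (D : Type) [Ring D] [Algebra ℂ D] [StarRing D] [StarModule ℂ D]
      (f : A →⋆ₐ[ℂ] D) (g : B →⋆ₐ[ℂ] D),
      ∃! h : carrier →⋆ₐ[ℂ] D, (∀ a, h (inl a) = f a) ∧ (∀ b, h (inr b) = g b)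

attribute [instance] FreeProd.ring FreeProd.algebra FreeProd.starRing FreeProd.starModule

namespace FreeProd

variable {A B : Type} [Ring A] [Algebra ℂ A] [StarRing A]
    [Ring B] [Algebra ℂ B] [StarRing B]

/-- The canonical embedding of a tagged element into the free product. -/
def embed (F : FreeProd A B) : A ⊕ B → F.carrier :=
  Sum.elim (fun a => F.inl a) (fun b => F.inr b)

/-- `Ψ` is the free product functional of `φ` and `ψ` on the free product `F`:
it is unital, restricts to `φ` and `ψ` on the two legs, and vanishes on alternating
products of centered elements. -/
def IsFreeProdFunctional (F : FreeProd A B) (φ : A →ₗ[ℂ] ℂ) (ψ : B →ₗ[ℂ] ℂ)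
    (Ψ : F.carrier →ₗ[ℂ] ℂ) : Prop :=
  Ψ 1 = 1 ∧ (∀ a, Ψ (F.inl a) = φ a) ∧ (∀ b, Ψ (F.inr b) = ψ b) ∧
  ∀ l : List (A ⊕ B), l ≠ [] →
    l.Chain' (fun x y => x.isLeft ≠ y.isLeft) →
    (∀ x ∈ l, Sum.elim (fun a => φ a = 0) (fun b => ψ b = 0) x) →
    Ψ ((l.map F.embed).prod) = 0

end FreeProd

section ProdFunctionals

variable {A : Type} [Ring A] [Algebra ℂ A] [StarRing A]

/-- `Ψ` is the tensor (tensor-independent) product functional of `φ` and `ψ`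
relative to the counit `δc`. -/
def IsTensorProdFunctional (F : FreeProd A A) (δc : A →⋆ₐ[ℂ] ℂ)
    (φ ψ : A →ₗ[ℂ] ℂ) (Ψ : F.carrier →ₗ[ℂ] ℂ) : Prop :=
  Ψ 1 = 1 ∧
  ∀ l : List (A ⊕ A), l ≠ [] →
    l.Chain' (fun x y => x.isLeft ≠ y.isLeft) →
    (∀ x ∈ l, Sum.elim (fun a => δc a = 0) (fun b => δc b = 0) x) →
    Ψ ((l.map F.embed).prod) =
      φ (l.filterMap Sum.getLeft?).prod * ψ (l.filterMap Sum.getRight?).prod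

/-- `Ψ` is the boolean product functional of `φ` and `ψ` relative to the counit `δc`. -/
def IsBooleanProdFunctional (F : FreeProd A A) (δc : A →⋆ₐ[ℂ] ℂ)
    (φ ψ : A →ₗ[ℂ] ℂ) (Ψ : F.carrier →ₗ[ℂ] ℂ) : Prop :=
  Ψ 1 = 1 ∧
  ∀ l : List (A ⊕ A), l ≠ [] →
    l.Chain' (fun x y => x.isLeft ≠ y.isLeft) →
    (∀ x ∈ l, Sum.elim (fun a => δc a = 0) (fun b => δc b = 0) x) →
    Ψ ((l.map F.embed).prod) = (l.map (Sum.elim (fun a => φ a) (fun b => ψ b))).prod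

/-- `Ψ` is the monotone product functional of `φ` and `ψ` relative to the counit `δc`. -/
def IsMonotoneProdFunctional (F : FreeProd A A) (δc : A →⋆ₐ[ℂ] ℂ)
    (φ ψ : A →ₗ[ℂ] ℂ) (Ψ : F.carrier →ₗ[ℂ] ℂ) : Prop :=
  Ψ 1 = 1 ∧
  ∀ l : List (A ⊕ A), l ≠ [] →
    l.Chain' (fun x y => x.isLeft ≠ y.isLeft) →
    (∀ x ∈ l, Sum.elim (fun a => δc a = 0) (fun b => δc b = 0) x) →
    Ψ ((l.map F.embed).prod) =
      φ (l.filterMap Sum.getLeft?).prod * ((l.filterMap Sum.getRight?).map (fun b => ψ b)).prod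

/-- `Ψ` is the anti-monotone product functional of `φ` and `ψ` relative to the counit `δc`. -/
def IsAntiMonotoneProdFunctional (F : FreeProd A A) (δc : A →⋆ₐ[ℂ] ℂ)
    (φ ψ : A →ₗ[ℂ] ℂ) (Ψ : F.carrier →ₗ[ℂ] ℂ) : Prop :=
  Ψ 1 = 1 ∧
  ∀ l : List (A ⊕ A), l ≠ [] →
    l.Chain' (fun x y => x.isLeft ≠ y.isLeft) →
    (∀ x ∈ l, Sum.elim (fun a => δc a = 0) (fun b => δc b = 0) x) →
    Ψ ((l.map F.embed).prod) =
      ((l.filterMap Sum.getLeft?).map (fun a => φ a)).prod * ψ (l.filterMap Sum.getRight?).prod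

end ProdFunctionals

namespace BrownAlg

variable {n : ℕ}

/-- `Δ` is the coproduct of the unitary dual group `U⟨n⟩`. -/
def IsCoprod (U : BrownAlg n) (F : FreeProd U.carrier U.carrier)
    (Δ : U.carrier →⋆ₐ[ℂ] F.carrier) : Prop :=
  ∀ i j, Δ (U.u i j) = ∑ k, F.inl (U.u i k) * F.inr (U.u k j)

/-- `δc` is the counit of the unitary dual group `U⟨n⟩`. -/
def IsCounit (U : BrownAlg n) (δc : U.carrier →⋆ₐ[ℂ] ℂ) : Prop :=
  ∀ i j, δc (U.u i j) = if i = j then 1 else 0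

/-- `Σ` is the antipode of the unitary dual group `U⟨n⟩`. -/
def IsAntipode (U : BrownAlg n) (Sa : U.carrier →⋆ₐ[ℂ] U.carrier) : Prop :=
  ∀ i j, Sa (U.u i j) = star (U.u j i)

/-- `χ = φ ⋆_F ψ`, the free convolution of the states `φ` and `ψ` on `U⟨n⟩`. -/
def FreeConv (U : BrownAlg n) (F : FreeProd U.carrier U.carrier)
    (Δ : U.carrier →⋆ₐ[ℂ] F.carrier) (φ ψ χ : U.carrier →ₗ[ℂ] ℂ) : Prop :=
  ∃ Ψ : F.carrier →ₗ[ℂ] ℂ, F.IsFreeProdFunctional φ ψ Ψ ∧ ∀ a, Ψ (Δ a) = χ a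

/-- `χ = φ ⋆_T ψ`, the tensor convolution of the states `φ` and `ψ` on `U⟨n⟩`. -/
def TensorConv (U : BrownAlg n) (F : FreeProd U.carrier U.carrier)
    (Δ : U.carrier →⋆ₐ[ℂ] F.carrier) (δc : U.carrier →⋆ₐ[ℂ] ℂ)
    (φ ψ χ : U.carrier →ₗ[ℂ] ℂ) : Prop :=
  ∃ Ψ : F.carrier →ₗ[ℂ] ℂ, IsTensorProdFunctional F δc φ ψ Ψ ∧ ∀ a, Ψ (Δ a) = χ a

/-- `χ = φ ⋆_B ψ`, the boolean convolution. -/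
def BooleanConv (U : BrownAlg n) (F : FreeProd U.carrier U.carrier)
    (Δ : U.carrier →⋆ₐ[ℂ] F.carrier) (δc : U.carrier →⋆ₐ[ℂ] ℂ)
    (φ ψ χ : U.carrier →ₗ[ℂ] ℂ) : Prop :=
  ∃ Ψ : F.carrier →ₗ[ℂ] ℂ, IsBooleanProdFunctional F δc φ ψ Ψ ∧ ∀ a, Ψ (Δ a) = χ a

/-- `χ = φ ⋆_M ψ`, the monotone convolution. -/
def MonotoneConv (U : BrownAlg n) (F : FreeProd U.carrier U.carrier)
    (Δ : U.carrier →⋆ₐ[ℂ] F.carrier) (δc : U.carrier →⋆ₐ[ℂ] ℂ)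
    (φ ψ χ : U.carrier →ₗ[ℂ] ℂ) : Prop :=
  ∃ Ψ : F.carrier →ₗ[ℂ] ℂ, IsMonotoneProdFunctional F δc φ ψ Ψ ∧ ∀ a, Ψ (Δ a) = χ a

/-- `χ = φ ⋆_AM ψ`, the anti-monotone convolution. -/
def AntiMonotoneConv (U : BrownAlg n) (F : FreeProd U.carrier U.carrier)
    (Δ : U.carrier →⋆ₐ[ℂ] F.carrier) (δc : U.carrier →⋆ₐ[ℂ] ℂ)
    (φ ψ χ : U.carrier →ₗ[ℂ] ℂ) : Prop :=
  ∃ Ψ : F.carrier →ₗ[ℂ] ℂ, IsAntiMonotoneProdFunctional F δc φ ψ Ψ ∧ ∀ a, Ψ (Δ a) = χ a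

end BrownAlg

/-! On `x⁽¹⁾ y⁽²⁾ z⁽¹⁾` the anti-monotone product `φ ◁ ψ` takes the value
`(ψ y - δ y) φ x φ z + δ y φ (x z)`. Hence if `φ` vanishes on the generators, expanding
`Δ (u i j * (u k l)⋆)` shows that `φ ⋆_AM ψ` and `φ` agree on `u i j * (u k l)⋆`.
Averaging the characters `u ↦ V` and `u ↦ -V` of a unitary matrix `V` gives a tracial state which
vanishes on the generators and takes the value `|V i i|²` on `u i i * (u i i)⋆`.
A fixed point `h` of all maps `φ ⋆_AM ·` would thus satisfy `h (u i i * (u i i)⋆) = 1`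
(from `V = 1`) and `= 0` (from a transposition matrix moving `i`). -/

section States

variable {A : Type} [Ring A] [Algebra ℂ A] [StarRing A]

theorem convex_setOf_isTracialState : Convex ℝ {φ : A →ₗ[ℂ] ℂ | IsTracialState φ} := by
  rintro φ ⟨⟨hφ1, hφpos⟩, hφtr⟩ ψ ⟨⟨hψ1, hψpos⟩, hψtr⟩ s t hs ht hst
  refine ⟨⟨?_, fun a => ?_⟩, fun a b => ?_⟩
  · simp [hφ1, hψ1, Complex.real_smul, ← Complex.ofReal_add, hst]
  · simp only [LinearMap.add_apply, LinearMap.smul_apply, Complex.real_smul, Complex.add_re,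
      Complex.add_im, Complex.re_ofReal_mul, Complex.im_ofReal_mul, (hφpos a).2, (hψpos a).2]
    exact ⟨by nlinarith [(hφpos a).1, (hψpos a).1], by ring⟩
  · simp [hφtr a b, hψtr a b]

theorem StarAlgHom.isTracialState (χ : A →⋆ₐ[ℂ] ℂ) : IsTracialState χ.toAlgHom.toLinearMap := by
  refine ⟨⟨map_one χ, fun a => ?_⟩, fun a b => ?_⟩
  · have : χ (star a * a) = (Complex.normSq (χ a) : ℂ) := by
      rw [map_mul, map_star, Complex.normSq_eq_conj_mul_self]; rfl
    simp [this, Complex.normSq_nonneg]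
  · simp [mul_comm]

end States

theorem Matrix.swap_mem_unitaryGroup {ι R : Type*} [Fintype ι] [DecidableEq ι] [CommRing R]
    [StarRing R] (i j : ι) : Matrix.swap R i j ∈ Matrix.unitaryGroup ι R := by
  rw [Matrix.mem_unitaryGroup_iff, Matrix.star_eq_conjTranspose, Matrix.conjTranspose_swap,
    Matrix.swap_mul_self]

theorem exists_eq_add_smul_one_of_map_eq_zero {A G : Type*} [Ring A] [Algebra ℂ A]
    [FunLike G A ℂ] [AlgHomClass G ℂ A ℂ] (δc : G) (a : A) :
    ∃ a₀ : A, ∃ c : ℂ, δc a₀ = 0 ∧ a = a₀ + c • 1 :=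
  ⟨a - δc a • 1, δc a, by simp, by simp⟩

namespace IsAntiMonotoneProdFunctional

variable {A : Type} [Ring A] [Algebra ℂ A] [StarRing A] {F : FreeProd A A}
  {δc : A →⋆ₐ[ℂ] ℂ} {φ ψ : A →ₗ[ℂ] ℂ} {Ψ : F.carrier →ₗ[ℂ] ℂ}

theorem map_inl_of_ker (hΨ : IsAntiMonotoneProdFunctional F δc φ ψ Ψ) {a : A}
    (ha : δc a = 0) : Ψ (F.inl a) = φ a * ψ 1 := by
  simpa [FreeProd.embed, List.filterMap_cons] using
    hΨ.2 [.inl a] (by simp) (show List.IsChain _ _ by simp) (by simp [ha])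

theorem map_inr_of_ker (hΨ : IsAntiMonotoneProdFunctional F δc φ ψ Ψ) {b : A}
    (hb : δc b = 0) : Ψ (F.inr b) = ψ b := by
  simpa [FreeProd.embed, List.filterMap_cons] using
    hΨ.2 [.inr b] (by simp) (show List.IsChain _ _ by simp) (by simp [hb])

theorem map_inl_mul_inr_of_ker (hΨ : IsAntiMonotoneProdFunctional F δc φ ψ Ψ) {a b : A}
    (ha : δc a = 0) (hb : δc b = 0) : Ψ (F.inl a * F.inr b) = φ a * ψ b := by
  simpa [FreeProd.embed, List.filterMap_cons] using
    hΨ.2 [.inl a, .inr b] (by simp) (show List.IsChain _ _ by simp) (by simp [ha, hb])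

theorem map_inr_mul_inl_of_ker (hΨ : IsAntiMonotoneProdFunctional F δc φ ψ Ψ) {b a : A}
    (hb : δc b = 0) (ha : δc a = 0) : Ψ (F.inr b * F.inl a) = φ a * ψ b := by
  simpa [FreeProd.embed, List.filterMap_cons, mul_comm] using
    hΨ.2 [.inr b, .inl a] (by simp) (show List.IsChain _ _ by simp) (by simp [ha, hb])

theorem map_inl_mul_inr_mul_inl_of_ker (hΨ : IsAntiMonotoneProdFunctional F δc φ ψ Ψ)
    {a b c : A} (ha : δc a = 0) (hb : δc b = 0) (hc : δc c = 0) :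
    Ψ (F.inl a * F.inr b * F.inl c) = φ a * φ c * ψ b := by
  simpa [FreeProd.embed, List.filterMap_cons, mul_assoc, mul_comm, mul_left_comm] using
    hΨ.2 [.inl a, .inr b, .inl c] (by simp) (show List.IsChain _ _ by simp) (by simp [ha, hb, hc])

theorem map_inl_mul_inr_mul_inl (hΨ : IsAntiMonotoneProdFunctional F δc φ ψ Ψ)
    (hφ : φ 1 = 1) (hψ : ψ 1 = 1) (x y z : A) :
    Ψ (F.inl x * F.inr y * F.inl z) = (ψ y - δc y) * φ x * φ z + δc y * φ (x * z) := by
  obtain ⟨x, s, hx, rfl⟩ := exists_eq_add_smul_one_of_map_eq_zero δc x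
  obtain ⟨y, t, hy, rfl⟩ := exists_eq_add_smul_one_of_map_eq_zero δc y
  obtain ⟨z, r, hz, rfl⟩ := exists_eq_add_smul_one_of_map_eq_zero δc z
  have hxz : δc (x * z) = 0 := by rw [map_mul, hx, zero_mul]
  simp only [map_add, map_smul, map_one, add_mul, mul_add, smul_mul_assoc, mul_smul_comm,
    one_mul, mul_one, ← map_mul, hΨ.map_inl_mul_inr_mul_inl_of_ker hx hy hz,
    hΨ.map_inl_mul_inr_of_ker hx hy, hΨ.map_inr_mul_inl_of_ker hy hz, hΨ.map_inl_of_ker hx,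
    hΨ.map_inl_of_ker hz, hΨ.map_inl_of_ker hxz, hΨ.map_inr_of_ker hy, hΨ.1, hy, hφ, hψ,
    smul_eq_mul]
  ring

end IsAntiMonotoneProdFunctional

namespace BrownAlg

variable {n : ℕ}

section Characters

variable (U : BrownAlg n)

theorem exists_starAlgHom_u_eq (V : Matrix.unitaryGroup (Fin n) ℂ) :
    ∃ χ : U.carrier →⋆ₐ[ℂ] ℂ, ∀ i j, χ (U.u i j) = (V : Matrix (Fin n) (Fin n) ℂ) i j := by
  obtain ⟨χ, hχ, -⟩ := U.universal ℂ (fun i j => (V : Matrix (Fin n) (Fin n) ℂ) i j)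
    (fun i j => by
      simpa [Matrix.mul_apply, Matrix.one_apply] using
        congrFun₂ (Unitary.coe_star_mul_self V) i j)
    (fun i j => by
      simpa [Matrix.mul_apply, Matrix.one_apply] using
        congrFun₂ (Unitary.coe_mul_star_self V) i j)
  exact ⟨χ, hχ⟩

theorem exists_isTracialState_u_mul_star_u (V : Matrix.unitaryGroup (Fin n) ℂ) :
    ∃ φ : U.carrier →ₗ[ℂ] ℂ, IsTracialState φ ∧ (∀ i j, φ (U.u i j) = 0) ∧
      ∀ i j k l, φ (U.u i j * star (U.u k l)) =
        (V : Matrix (Fin n) (Fin n) ℂ) i j * star ((V : Matrix (Fin n) (Fin n) ℂ) k l) := by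
  obtain ⟨χ, hχ⟩ := U.exists_starAlgHom_u_eq V
  obtain ⟨χ', hχ'⟩ := U.exists_starAlgHom_u_eq (-V)
  refine ⟨(1 / 2 : ℝ) • χ.toAlgHom.toLinearMap + (1 / 2 : ℝ) • χ'.toAlgHom.toLinearMap,
    convex_setOf_isTracialState χ.isTracialState χ'.isTracialState
      (by norm_num) (by norm_num) (by norm_num), fun i j => ?_, fun i j k l => ?_⟩
  · simp [hχ, hχ', Unitary.coe_neg]
  · simp [hχ, hχ', map_star, Unitary.coe_neg, Complex.real_smul]
    ring

end Characters

variable {U : BrownAlg n} {F : FreeProd U.carrier U.carrier}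
  {Δ : U.carrier →⋆ₐ[ℂ] F.carrier} {δc : U.carrier →⋆ₐ[ℂ] ℂ}

theorem IsCoprod.map_u_mul_star_u (hΔ : U.IsCoprod F Δ) (i j k l : Fin n) :
    Δ (U.u i j * star (U.u k l)) =
      ∑ a, ∑ b, F.inl (U.u i a) * F.inr (U.u a j * star (U.u b l)) * F.inl (star (U.u k b)) := by
  simp only [map_mul, map_star, hΔ i j, hΔ k l, star_sum, star_mul, Finset.sum_mul_sum, mul_assoc]

theorem AntiMonotoneConv.apply_u_mul_star_u (hΔ : U.IsCoprod F Δ) (hδ : U.IsCounit δc)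
    {φ ψ χ : U.carrier →ₗ[ℂ] ℂ} (hconv : U.AntiMonotoneConv F Δ δc φ ψ χ) (hφ : φ 1 = 1)
    (hψ : ψ 1 = 1) (hφu : ∀ i j, φ (U.u i j) = 0) (i j k l : Fin n) :
    χ (U.u i j * star (U.u k l)) = φ (U.u i j * star (U.u k l)) := by
  obtain ⟨Ψ, hΨ, hχ⟩ := hconv
  rw [← hχ, hΔ.map_u_mul_star_u]
  simp only [map_sum, hΨ.map_inl_mul_inr_mul_inl hφ hψ, hφu, mul_zero, zero_mul, zero_add]
  simp [map_star, hδ _ _]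

theorem not_forall_antiMonotoneConv_self (hn : 2 ≤ n) (hΔ : U.IsCoprod F Δ)
    (hδ : U.IsCounit δc) {h : U.carrier →ₗ[ℂ] ℂ} (h1 : h 1 = 1) :
    ¬ ∀ φ, IsTracialState φ → U.AntiMonotoneConv F Δ δc φ h h := by
  intro hconv
  let i : Fin n := ⟨0, by omega⟩
  let j : Fin n := ⟨1, by omega⟩
  have hij : i ≠ j := by simp [i, j, Fin.ext_iff]
  have h_eq (V : Matrix.unitaryGroup (Fin n) ℂ) :
      h (U.u i i * star (U.u i i)) =
        (V : Matrix (Fin n) (Fin n) ℂ) i i * star ((V : Matrix (Fin n) (Fin n) ℂ) i i) := by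
    obtain ⟨φ, hφ, hφu, hφuu⟩ := U.exists_isTracialState_u_mul_star_u V
    rw [(hconv φ hφ).apply_u_mul_star_u hΔ hδ hφ.1.1 h1 hφu, hφuu]
  simpa [Matrix.swap, hij.symm] using
    (h_eq 1).symm.trans (h_eq ⟨Matrix.swap ℂ i j, Matrix.swap_mem_unitaryGroup i j⟩)

end BrownAlg

/-- For `n ≥ 2` there is no state `h` on the Brown algebra with
`φ ⋆_AM h = h` for every tracial state `φ`; in particular there is neither an
anti-monotone Haar state nor an anti-monotone Haar trace on `U⟨n⟩`. -/
theorem no_antimonotone_haar_state (n : ℕ) (hn : 2 ≤ n) (U : BrownAlg n)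
    (F : FreeProd U.carrier U.carrier) (Δ : U.carrier →⋆ₐ[ℂ] F.carrier)
    (hΔ : U.IsCoprod F Δ) (δc : U.carrier →⋆ₐ[ℂ] ℂ) (hδ : U.IsCounit δc) :
    (¬ ∃ h : U.carrier →ₗ[ℂ] ℂ, IsState h ∧
        ∀ φ : U.carrier →ₗ[ℂ] ℂ, IsTracialState φ → U.AntiMonotoneConv F Δ δc φ h h) ∧
    (¬ ∃ h : U.carrier →ₗ[ℂ] ℂ, IsState h ∧
        ∀ φ : U.carrier →ₗ[ℂ] ℂ, IsState φ →
          U.AntiMonotoneConv F Δ δc φ h h ∧ U.AntiMonotoneConv F Δ δc h φ h) ∧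
    (¬ ∃ h : U.carrier →ₗ[ℂ] ℂ, IsTracialState h ∧
        ∀ φ : U.carrier →ₗ[ℂ] ℂ, IsTracialState φ →
          U.AntiMonotoneConv F Δ δc φ h h ∧ U.AntiMonotoneConv F Δ δc h φ h) := by
  have no_fixed (h : U.carrier →ₗ[ℂ] ℂ) (hh : IsState h) :=
    BrownAlg.not_forall_antiMonotoneConv_self hn hΔ hδ hh.1
  exact ⟨fun ⟨h, hh, hconv⟩ ↦ no_fixed h hh hconv,
    fun ⟨h, hh, hconv⟩ ↦ no_fixed h hh fun φ hφ ↦ (hconv φ hφ.1).1,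
    fun ⟨h, hh, hconv⟩ ↦ no_fixed h hh.1 fun φ hφ ↦ (hconv φ hφ).1⟩
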